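/- arXiv:1205.0121 — 3 statements merged into one kernel-verified Lean document; each statement's English description precedes it below -/
import Mathlib

section
/- For a symmetric matrix Σ = AᵀA with columns a₁,…,aₙ of A, and 1 ≤ k ≤ n, the sparse maximum eigenvalue satisfies λ_max^k(Σ) = max over binary vectors u ∈ {0,1}ⁿ with ∑ᵢ uᵢ = k of λ_max(∑ᵢ uᵢ aᵢaᵢᵀ). -/
open Matrix
open scoped Matrix.Norms.L2Operator

section aux

variable {n : ℕ}

private lemma quadform_eq' (B : Matrix (Fin n) (Fin n) ℝ) (x : EuclideanSpace ℝ (Fin n)) :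
    dotProduct x ((Bᵀ * B).mulVec x) =
      ‖toEuclideanCLM (𝕜 := ℝ) (n := Fin n) B x‖ ^ 2 := by
  have hv : WithLp.equiv 2 _ (toEuclideanCLM (𝕜 := ℝ) (n := Fin n) B x)
      = B.mulVec (WithLp.equiv 2 _ x) := ofLp_toEuclideanCLM B x
  rw [← Matrix.mulVec_mulVec, Matrix.dotProduct_mulVec, ← Matrix.mulVec_transpose,
    transpose_transpose, ← real_inner_self_eq_norm_sq]
  have : ∀ i, toEuclideanCLM (𝕜 := ℝ) (n := Fin n) B x i = B.mulVec x i := fun i =>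
    congrFun hv i
  simp [PiLp.inner_apply, RCLike.inner_apply, dotProduct, this, mul_comm]
  rw [EuclideanSpace.norm_sq_eq]
  simp [this, sq]

private lemma norm_single_one (hn : 0 < n) :
    ‖(EuclideanSpace.single (⟨0, hn⟩ : Fin n) (1:ℝ) : EuclideanSpace ℝ (Fin n))‖ = 1 := by
  simp [EuclideanSpace.norm_single]

private lemma sup_quadform (hn : 0 < n) (B : Matrix (Fin n) (Fin n) ℝ) :
    sSup {r | ∃ x : EuclideanSpace ℝ (Fin n), ‖x‖ = 1 ∧
      r = dotProduct x ((Bᵀ * B).mulVec x)} = ‖B‖ ^ 2 := by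
  set L := toEuclideanCLM (𝕜 := ℝ) (n := Fin n) B with hL
  have hBL : ‖B‖ = ‖L‖ := rfl
  set T := {r | ∃ x : EuclideanSpace ℝ (Fin n), ‖x‖ = 1 ∧
      r = dotProduct x ((Bᵀ * B).mulVec x)} with hT
  have hmem : ∀ x : EuclideanSpace ℝ (Fin n), ‖x‖ = 1 → ‖L x‖ ^ 2 ∈ T := fun x hx =>
    ⟨x, hx, (quadform_eq' B x).symm⟩
  have hub : ∀ r ∈ T, r ≤ ‖B‖ ^ 2 := by
    rintro r ⟨x, hx, rfl⟩
    rw [quadform_eq' B x, hBL]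
    calc ‖L x‖ ^ 2 ≤ (‖L‖ * ‖x‖) ^ 2 := by
          apply pow_le_pow_left₀ (norm_nonneg _) (L.le_opNorm x)
      _ = ‖L‖ ^ 2 := by rw [hx, mul_one]
  have hbdd : BddAbove T := ⟨‖B‖ ^ 2, hub⟩
  have hne : T.Nonempty := ⟨_, hmem _ (norm_single_one hn)⟩
  have h0 : (0:ℝ) ≤ sSup T := le_trans (by positivity) (le_csSup hbdd (hmem _ (norm_single_one hn)))
  refine le_antisymm (csSup_le hne hub) ?_
  have hnorm : ‖L‖ ≤ Real.sqrt (sSup T) := by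
    apply ContinuousLinearMap.opNorm_le_bound _ (Real.sqrt_nonneg _)
    intro x
    rcases eq_or_ne x 0 with rfl | hx
    · simp
    · have hxn : ‖x‖ ≠ 0 := norm_ne_zero_iff.mpr hx
      have hux : ‖(‖x‖⁻¹ • x : EuclideanSpace ℝ (Fin n))‖ = 1 := by
        rw [norm_smul, norm_inv, norm_norm, inv_mul_cancel₀ hxn]
      have h1 : ‖L (‖x‖⁻¹ • x)‖ ^ 2 ≤ sSup T := le_csSup hbdd (hmem _ hux)
      have h2 : ‖L (‖x‖⁻¹ • x)‖ ≤ Real.sqrt (sSup T) :=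
        (Real.le_sqrt (norm_nonneg _) h0).mpr h1
      rw [_root_.map_smul, norm_smul, norm_inv, norm_norm] at h2
      calc ‖L x‖ = ‖x‖ * (‖x‖⁻¹ * ‖L x‖) := by field_simp
        _ ≤ ‖x‖ * Real.sqrt (sSup T) := by
            exact mul_le_mul_of_nonneg_left h2 (norm_nonneg _)
        _ = Real.sqrt (sSup T) * ‖x‖ := mul_comm _ _
  rw [hBL]
  calc ‖L‖ ^ 2 ≤ Real.sqrt (sSup T) ^ 2 := pow_le_pow_left₀ (norm_nonneg _) hnorm 2
    _ = sSup T := Real.sq_sqrt h0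

private lemma enorm_mono (v w : EuclideanSpace ℝ (Fin n)) (h : ∀ i, |v i| ≤ |w i|) :
    ‖v‖ ≤ ‖w‖ := by
  rw [EuclideanSpace.norm_eq, EuclideanSpace.norm_eq]
  apply Real.sqrt_le_sqrt
  apply Finset.sum_le_sum
  intro i _
  rw [Real.norm_eq_abs, Real.norm_eq_abs]
  exact pow_le_pow_left₀ (abs_nonneg _) (h i) 2

/-- the sum of rank-one matrices equals `(A * diagonal u) * (A * diagonal u)ᵀ` for binary u -/
private lemma sum_vecMulVec_eq (A : Matrix (Fin n) (Fin n) ℝ) (u : Fin n → ℝ)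
    (hu : ∀ i, u i = 0 ∨ u i = 1) :
    (∑ i, u i • Matrix.vecMulVec (fun j => A j i) (fun j => A j i)) =
      ((A * diagonal u)ᵀ)ᵀ * (A * diagonal u)ᵀ := by
  ext j l
  rw [transpose_transpose, Matrix.sum_apply]
  simp only [Matrix.smul_apply, vecMulVec_apply, smul_eq_mul, Matrix.mul_apply,
    Matrix.transpose_apply, Matrix.mul_apply, diagonal_apply]
  refine Finset.sum_congr rfl fun i _ => ?_
  have hsum : (∑ m, A j m * if m = i then u m else 0) = A j i * u i := by
    rw [Finset.sum_eq_single i] <;> simp +contextual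
  have hsum' : (∑ m, A l m * if m = i then u m else 0) = A l i * u i := by
    rw [Finset.sum_eq_single i] <;> simp +contextual
  rw [hsum, hsum']
  rcases hu i with h | h <;> rw [h] <;> ring

private lemma opnorm_le_of (M : Matrix (Fin n) (Fin n) ℝ) {c : ℝ} (hc : 0 ≤ c)
    (h : ∀ y : EuclideanSpace ℝ (Fin n), ‖toEuclideanCLM (𝕜 := ℝ) (n := Fin n) M y‖ ≤ c * ‖y‖) :
    ‖M‖ ≤ c := by
  rw [Matrix.cstar_norm_def]
  exact ContinuousLinearMap.opNorm_le_bound _ hc h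

end aux

theorem stmt_3 (n k : ℕ) (hk1 : 1 ≤ k) (hkn : k ≤ n) (A : Matrix (Fin n) (Fin n) ℝ) :
    sSup {r | ∃ x : EuclideanSpace ℝ (Fin n), ‖x‖ = 1 ∧ (Function.support x).ncard ≤ k ∧
        r = dotProduct x ((Aᵀ * A).mulVec x)} =
    sSup {r | ∃ u : Fin n → ℝ, (∀ i, u i = 0 ∨ u i = 1) ∧ (∑ i, u i) = k ∧
        r = sSup {s | ∃ x : EuclideanSpace ℝ (Fin n), ‖x‖ = 1 ∧
          s = dotProduct x
            ((∑ i, u i • Matrix.vecMulVec (fun j => A j i) (fun j => A j i)).mulVec x)}} := by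
  have hn : 0 < n := lt_of_lt_of_le hk1 hkn
  set LA := toEuclideanCLM (𝕜 := ℝ) (n := Fin n) A with hLA
  set S₁ := {r | ∃ x : EuclideanSpace ℝ (Fin n), ‖x‖ = 1 ∧ (Function.support x).ncard ≤ k ∧
        r = dotProduct x ((Aᵀ * A).mulVec x)} with hS₁
  set S₂ := {r | ∃ u : Fin n → ℝ, (∀ i, u i = 0 ∨ u i = 1) ∧ (∑ i, u i) = k ∧
        r = sSup {s | ∃ x : EuclideanSpace ℝ (Fin n), ‖x‖ = 1 ∧
          s = dotProduct x
            ((∑ i, u i • Matrix.vecMulVec (fun j => A j i) (fun j => A j i)).mulVec x)}} with hS₂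
  -- inner sSup values
  have hinner : ∀ u : Fin n → ℝ, (∀ i, u i = 0 ∨ u i = 1) →
      sSup {s | ∃ x : EuclideanSpace ℝ (Fin n), ‖x‖ = 1 ∧
        s = dotProduct x
          ((∑ i, u i • Matrix.vecMulVec (fun j => A j i) (fun j => A j i)).mulVec x)} =
      ‖A * diagonal u‖ ^ 2 := by
    intro u hu
    rw [show {s | ∃ x : EuclideanSpace ℝ (Fin n), ‖x‖ = 1 ∧
        s = dotProduct x
          ((∑ i, u i • Matrix.vecMulVec (fun j => A j i) (fun j => A j i)).mulVec x)} =
      {s | ∃ x : EuclideanSpace ℝ (Fin n), ‖x‖ = 1 ∧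
        s = dotProduct x ((((A * diagonal u)ᵀ)ᵀ * (A * diagonal u)ᵀ).mulVec x)} from by
        rw [sum_vecMulVec_eq A u hu]]
    rw [sup_quadform hn ((A * diagonal u)ᵀ)]
    congr 1
    rw [show (A * diagonal u)ᵀ = (A * diagonal u)ᴴ from
      (Matrix.conjTranspose_eq_transpose_of_trivial _).symm]
    exact Matrix.l2_opNorm_conjTranspose _
  -- coordinates of toEuclideanCLM (diagonal u)
  have hdiag : ∀ (u : Fin n → ℝ) (y : EuclideanSpace ℝ (Fin n)) (i : Fin n),
      (toEuclideanCLM (𝕜 := ℝ) (n := Fin n) (diagonal u) y) i = u i * y i := by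
    intro u y i
    have := congrFun (ofLp_toEuclideanCLM (diagonal u) y) i
    simpa [Matrix.mulVec_diagonal] using this
  -- contraction for binary u
  have hcontr : ∀ (u : Fin n → ℝ), (∀ i, u i = 0 ∨ u i = 1) →
      ∀ y : EuclideanSpace ℝ (Fin n),
        ‖toEuclideanCLM (𝕜 := ℝ) (n := Fin n) (diagonal u) y‖ ≤ ‖y‖ := by
    intro u hu y
    apply enorm_mono
    intro i
    rw [hdiag u y i, abs_mul]
    rcases hu i with h | h <;> simp [h]
  -- mul decomposition
  have hmul : ∀ (u : Fin n → ℝ) (y : EuclideanSpace ℝ (Fin n)),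
      toEuclideanCLM (𝕜 := ℝ) (n := Fin n) (A * diagonal u) y =
        LA (toEuclideanCLM (𝕜 := ℝ) (n := Fin n) (diagonal u) y) := by
    intro u y
    rw [_root_.map_mul]
    rfl
  -- S₂ elements bounded by ‖A‖²
  have hub₂ : ∀ r ∈ S₂, r ≤ ‖A‖ ^ 2 := by
    rintro r ⟨u, hu, hsum, rfl⟩
    rw [hinner u hu]
    have hle : ‖A * diagonal u‖ ≤ ‖A‖ := by
      apply opnorm_le_of _ (norm_nonneg (A : Matrix (Fin n) (Fin n) ℝ))
      intro y
      rw [hmul u y]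
      calc ‖LA (toEuclideanCLM (𝕜 := ℝ) (n := Fin n) (diagonal u) y)‖
          ≤ ‖LA‖ * ‖toEuclideanCLM (𝕜 := ℝ) (n := Fin n) (diagonal u) y‖ := LA.le_opNorm _
        _ ≤ ‖LA‖ * ‖y‖ := by
            exact mul_le_mul_of_nonneg_left (hcontr u hu y) (norm_nonneg _)
    exact pow_le_pow_left₀ (norm_nonneg _) hle 2
  have hbdd₂ : BddAbove S₂ := ⟨‖A‖ ^ 2, hub₂⟩
  -- S₁ facts
  have hmem₁ : ∀ x : EuclideanSpace ℝ (Fin n), ‖x‖ = 1 → (Function.support x).ncard ≤ k →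
      ‖LA x‖ ^ 2 ∈ S₁ := fun x hx hsupp => ⟨x, hx, hsupp, (quadform_eq' A x).symm⟩
  have hub₁ : ∀ r ∈ S₁, r ≤ ‖A‖ ^ 2 := by
    rintro r ⟨x, hx, -, rfl⟩
    rw [quadform_eq' A x]
    calc ‖LA x‖ ^ 2 ≤ (‖LA‖ * ‖x‖) ^ 2 := pow_le_pow_left₀ (norm_nonneg _) (LA.le_opNorm x) 2
      _ = ‖A‖ ^ 2 := by rw [hx, mul_one]; rfl
  have hbdd₁ : BddAbove S₁ := ⟨‖A‖ ^ 2, hub₁⟩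
  have hx₀supp : (Function.support
      (EuclideanSpace.single (⟨0, hn⟩ : Fin n) (1:ℝ) : EuclideanSpace ℝ (Fin n))).ncard ≤ k := by
    have hsub : Function.support
        (EuclideanSpace.single (⟨0, hn⟩ : Fin n) (1:ℝ) : EuclideanSpace ℝ (Fin n)) ⊆
        {(⟨0, hn⟩ : Fin n)} := by
      intro j hj
      simp only [Function.mem_support, EuclideanSpace.single_apply] at hj
      by_contra hne
      simp_all
    calc _ ≤ ({(⟨0, hn⟩ : Fin n)} : Set (Fin n)).ncard := Set.ncard_le_ncard hsub (Set.toFinite _)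
      _ = 1 := Set.ncard_singleton _
      _ ≤ k := hk1
  have hne₁ : S₁.Nonempty := ⟨_, hmem₁ _ (norm_single_one hn) hx₀supp⟩
  have h0 : (0:ℝ) ≤ sSup S₁ :=
    le_trans (by positivity) (le_csSup hbdd₁ (hmem₁ _ (norm_single_one hn) hx₀supp))
  -- key bound: ‖A * diagonal u‖ ≤ sqrt (sSup S₁) when u is binary with few ones
  have hkey : ∀ u : Fin n → ℝ, (∀ i, u i = 0 ∨ u i = 1) →
      ({i | u i ≠ 0} : Set (Fin n)).ncard ≤ k → ‖A * diagonal u‖ ≤ Real.sqrt (sSup S₁) := by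
    intro u hu hcard
    apply opnorm_le_of _ (Real.sqrt_nonneg _)
    intro y
    rw [hmul u y]
    set z := toEuclideanCLM (𝕜 := ℝ) (n := Fin n) (diagonal u) y with hz
    have hzy : ‖z‖ ≤ ‖y‖ := hcontr u hu y
    have hzsupp : Function.support z ⊆ {i | u i ≠ 0} := by
      intro i hi
      rw [Function.mem_support, hz, hdiag u y i] at hi
      exact fun h => hi (by rw [h, zero_mul])
    rcases eq_or_ne z 0 with h | h
    · rw [h, map_zero, norm_zero]
      positivity
    · have hzn : ‖z‖ ≠ 0 := norm_ne_zero_iff.mpr h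
      have huz : ‖(‖z‖⁻¹ • z : EuclideanSpace ℝ (Fin n))‖ = 1 := by
        rw [norm_smul, norm_inv, norm_norm, inv_mul_cancel₀ hzn]
      have hsupp' : (Function.support (‖z‖⁻¹ • z : EuclideanSpace ℝ (Fin n))).ncard ≤ k := by
        refine le_trans (Set.ncard_le_ncard ?_ (Set.toFinite _))
          (le_trans (Set.ncard_le_ncard hzsupp (Set.toFinite _)) hcard)
        intro i hi
        rw [Function.mem_support] at hi ⊢
        have hsm : (‖z‖⁻¹ • z : EuclideanSpace ℝ (Fin n)) i = ‖z‖⁻¹ * z i := rfl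
        exact fun h => hi (by rw [hsm, h, mul_zero])
      have h1 : ‖LA (‖z‖⁻¹ • z)‖ ^ 2 ≤ sSup S₁ := le_csSup hbdd₁ (hmem₁ _ huz hsupp')
      have h2 : ‖LA (‖z‖⁻¹ • z)‖ ≤ Real.sqrt (sSup S₁) := (Real.le_sqrt (norm_nonneg _) h0).mpr h1
      rw [_root_.map_smul, norm_smul, norm_inv, norm_norm] at h2
      calc ‖LA z‖ = ‖z‖ * (‖z‖⁻¹ * ‖LA z‖) := by field_simp
        _ ≤ ‖z‖ * Real.sqrt (sSup S₁) := mul_le_mul_of_nonneg_left h2 (norm_nonneg _)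
        _ ≤ Real.sqrt (sSup S₁) * ‖y‖ := by
            rw [mul_comm]
            exact mul_le_mul_of_nonneg_left hzy (Real.sqrt_nonneg _)
  -- indicator facts
  have hind : ∀ S : Finset (Fin n), S.card = k →
      (∀ i, (if i ∈ S then (1:ℝ) else 0) = 0 ∨ (if i ∈ S then (1:ℝ) else 0) = 1) ∧
      (∑ i, if i ∈ S then (1:ℝ) else 0) = k := by
    intro S hS
    refine ⟨fun i => by by_cases h : i ∈ S <;> simp [h], ?_⟩
    rw [Finset.sum_ite_mem, Finset.univ_inter, Finset.sum_const, nsmul_eq_mul, mul_one, hS]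
  refine le_antisymm ?_ ?_
  · -- LHS ≤ RHS
    apply csSup_le hne₁
    rintro r ⟨x, hx, hsupp, rfl⟩
    -- choose superset of support of card k
    have hfin : (Function.support x).Finite := Set.toFinite _
    obtain ⟨S, hsubS, -, hScard⟩ :=
      Finset.exists_subsuperset_card_eq (n := k) (Finset.subset_univ hfin.toFinset)
        (by rwa [← Set.ncard_eq_toFinset_card _ hfin]) (by simpa using hkn)
    set u : Fin n → ℝ := fun i => if i ∈ S then 1 else 0 with hu
    obtain ⟨hub, husum⟩ := hind S hScard
    have hDx : toEuclideanCLM (𝕜 := ℝ) (n := Fin n) (diagonal u) x = x := by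
      ext i
      rw [hdiag]
      by_cases h : x i = 0
      · rw [h, mul_zero]
      · have : i ∈ S := hsubS (by simpa [Set.Finite.mem_toFinset] using h)
        simp [hu, this]
    have hr : dotProduct x ((Aᵀ * A).mulVec x) =
        ‖toEuclideanCLM (𝕜 := ℝ) (n := Fin n) (A * diagonal u) x‖ ^ 2 := by
      rw [quadform_eq' A x, hmul u x, hDx]
    rw [hr]
    have hle : ‖toEuclideanCLM (𝕜 := ℝ) (n := Fin n) (A * diagonal u) x‖ ^ 2 ≤
        ‖A * diagonal u‖ ^ 2 := by
      calc _ ≤ (‖A * diagonal u‖ * ‖x‖) ^ 2 := pow_le_pow_left₀ (norm_nonneg _)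
            ((toEuclideanCLM (𝕜 := ℝ) (n := Fin n) (A * diagonal u)).le_opNorm x) 2
        _ = _ := by rw [hx, mul_one]
    refine le_trans hle (le_csSup hbdd₂ ⟨u, hub, husum, ?_⟩)
    rw [hinner u hub]
  · -- RHS ≤ LHS
    have hne₂ : S₂.Nonempty := by
      obtain ⟨S, -, hScard⟩ := Finset.exists_subset_card_eq (by simpa using hkn :
        k ≤ (Finset.univ : Finset (Fin n)).card)
      obtain ⟨hub, husum⟩ := hind S hScard
      exact ⟨_, ⟨_, hub, husum, rfl⟩⟩
    apply csSup_le hne₂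
    rintro r ⟨u, hu, hsum, rfl⟩
    rw [hinner u hu]
    -- count of nonzero entries of u is k
    have hcard : ({i | u i ≠ 0} : Set (Fin n)).ncard ≤ k := by
      have h1 : ({i | u i ≠ 0} : Set (Fin n)) = ↑(Finset.univ.filter (fun i => u i ≠ 0)) := by
        ext i; simp
      have h2 : (∑ i, u i) = ((Finset.univ.filter (fun i => u i ≠ 0)).card : ℝ) := by
        rw [Finset.card_filter]
        push_cast
        apply Finset.sum_congr rfl
        intro i _
        rcases hu i with h | h <;> simp [h]
      rw [h1, Set.ncard_coe_finset]
      have : ((Finset.univ.filter (fun i => u i ≠ 0)).card : ℝ) = (k : ℝ) := by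
        rw [← h2, hsum]
      exact_mod_cast this.le
    have := hkey u hu hcard
    calc ‖A * diagonal u‖ ^ 2 ≤ Real.sqrt (sSup S₁) ^ 2 := pow_le_pow_left₀ (norm_nonneg _) this 2
      _ = sSup S₁ := Real.sq_sqrt h0
end

section
/- Fix r ≥ 2, α > 0, ρ > 0, and i.i.d. standard Gaussians ξ₁,…,ξ_r. The minimum of E[(α ξ₁² − ∑_{j=2}^r β_j ξ_j²)₊] over nonnegative vectors β = (β₂,…,β_r) with ∑_{j=2}^r β_j ≤ ρ is attained at β_j = ρ/(r−1) for all j, with value E[(α ξ₁² − (ρ/(r−1)) ∑_{j=2}^r ξ_j²)₊]. -/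
open MeasureTheory ProbabilityTheory Real

namespace Stmt10Aux

noncomputable def M (n : ℕ) : Measure (ℝ × (Fin n → ℝ)) :=
  (gaussianReal 0 1).prod (Measure.pi fun _ : Fin n => gaussianReal 0 1)

instance (n : ℕ) : IsProbabilityMeasure (M n) := by
  unfold M; infer_instance

noncomputable def F (n : ℕ) (α : ℝ) (β : Fin n → ℝ) : ℝ :=
  ∫ p, max (α * p.1 ^ 2 - ∑ j, β j * (p.2 j) ^ 2) 0 ∂(M n)

lemma sq_integrable : Integrable (fun x : ℝ => x ^ 2) (gaussianReal 0 1) := by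
  rw [gaussianReal_of_var_ne_zero _ one_ne_zero,
    integrable_withDensity_iff (measurable_gaussianPDF 0 1)
      (ae_of_all _ fun x => ENNReal.ofReal_lt_top)]
  have h2 : Integrable (fun x : ℝ => x ^ 2 * rexp (-(2⁻¹ : ℝ) * x ^ 2)) := by
    have h := integrable_rpow_mul_exp_neg_mul_sq (b := (2⁻¹ : ℝ)) (by norm_num)
      (s := (2 : ℝ)) (by norm_num)
    have : ∀ x : ℝ, x ^ (2 : ℝ) = x ^ (2 : ℕ) := fun x => by
      rw [show (2 : ℝ) = ((2 : ℕ) : ℝ) by norm_num, Real.rpow_natCast]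
    simpa [this] using h
  refine ((h2.const_mul ((√(2 * π))⁻¹)).congr (ae_of_all _ fun x => ?_))
  simp only [gaussianPDF_def]
  rw [ENNReal.toReal_ofReal (gaussianPDFReal_nonneg 0 1 x)]
  simp only [gaussianPDFReal_def]
  have hexp : -(x - 0) ^ 2 / (2 * ((1 : NNReal) : ℝ)) = -(2⁻¹ : ℝ) * x ^ 2 := by
    push_cast; ring
  rw [hexp]
  push_cast
  ring_nf

lemma integrable_dom (n : ℕ) (α : ℝ) :
    Integrable (fun p : ℝ × (Fin n → ℝ) => α * p.1 ^ 2) (M n) := by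
  have hpres : MeasurePreserving (Prod.fst : ℝ × (Fin n → ℝ) → ℝ) (M n) (gaussianReal 0 1) :=
    ⟨measurable_fst, by rw [M, Measure.map_fst_prod]; simp⟩
  have h := sq_integrable.const_mul α
  exact (hpres.integrable_comp h.aestronglyMeasurable).2 h

lemma meas_aux (n : ℕ) (α : ℝ) (β : Fin n → ℝ) :
    AEStronglyMeasurable
      (fun p : ℝ × (Fin n → ℝ) => max (α * p.1 ^ 2 - ∑ j, β j * (p.2 j) ^ 2) 0) (M n) := by
  apply Continuous.aestronglyMeasurable
  refine Continuous.max ?_ continuous_const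
  exact (continuous_const.mul (continuous_fst.pow 2)).sub
    (continuous_finset_sum _ fun j _ =>
      continuous_const.mul (((continuous_apply j).comp continuous_snd).pow 2))

lemma integrable_F (n : ℕ) {α : ℝ} (hα : 0 ≤ α) (β : Fin n → ℝ) (hβ : ∀ j, 0 ≤ β j) :
    Integrable (fun p : ℝ × (Fin n → ℝ) =>
      max (α * p.1 ^ 2 - ∑ j, β j * (p.2 j) ^ 2) 0) (M n) := by
  refine Integrable.mono' (integrable_dom n α) (meas_aux n α β) (ae_of_all _ fun p => ?_)
  rw [Real.norm_eq_abs, abs_of_nonneg (le_max_right _ _)]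
  refine max_le ?_ ?_
  · have h : (0 : ℝ) ≤ ∑ j, β j * (p.2 j) ^ 2 :=
      Finset.sum_nonneg fun j _ => mul_nonneg (hβ j) (sq_nonneg _)
    linarith
  · positivity

lemma convexOn_F (n : ℕ) {α : ℝ} (hα : 0 ≤ α) :
    ConvexOn ℝ {β : Fin n → ℝ | ∀ j, 0 ≤ β j} (F n α) := by
  constructor
  · intro β hβ γ hγ a b ha hb _
    intro j
    simpa using add_nonneg (mul_nonneg ha (hβ j)) (mul_nonneg hb (hγ j))
  · intro β hβ γ hγ a b ha hb hab
    rw [Set.mem_setOf_eq] at hβ hγ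
    have habc : ∀ j, 0 ≤ (a • β + b • γ) j := fun j => by
      simpa using add_nonneg (mul_nonneg ha (hβ j)) (mul_nonneg hb (hγ j))
    have key : ∀ p : ℝ × (Fin n → ℝ),
        max (α * p.1 ^ 2 - ∑ j, (a • β + b • γ) j * (p.2 j) ^ 2) 0
          ≤ a * max (α * p.1 ^ 2 - ∑ j, β j * (p.2 j) ^ 2) 0
            + b * max (α * p.1 ^ 2 - ∑ j, γ j * (p.2 j) ^ 2) 0 := by
      intro p
      set u := α * p.1 ^ 2 - ∑ j, β j * (p.2 j) ^ 2 with hu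
      set v := α * p.1 ^ 2 - ∑ j, γ j * (p.2 j) ^ 2 with hv
      have h1 : α * p.1 ^ 2 - ∑ j, (a • β + b • γ) j * (p.2 j) ^ 2 = a * u + b * v := by
        rw [hu, hv]
        have : ∑ j, (a • β + b • γ) j * (p.2 j) ^ 2
            = a * ∑ j, β j * (p.2 j) ^ 2 + b * ∑ j, γ j * (p.2 j) ^ 2 := by
          rw [Finset.mul_sum, Finset.mul_sum, ← Finset.sum_add_distrib]
          exact Finset.sum_congr rfl fun j _ => by simp; ring
        rw [this]
        have h2 : a * (α * p.1 ^ 2) + b * (α * p.1 ^ 2) = α * p.1 ^ 2 := by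
          rw [← add_mul, hab, one_mul]
        linarith
      rw [h1]
      refine max_le ?_ ?_
      · exact add_le_add (mul_le_mul_of_nonneg_left (le_max_left u 0) ha)
          (mul_le_mul_of_nonneg_left (le_max_left v 0) hb)
      · exact add_nonneg (mul_nonneg ha (le_max_right u 0)) (mul_nonneg hb (le_max_right v 0))
    have hint1 := integrable_F n hα β hβ
    have hint2 := integrable_F n hα γ hγ
    have hint0 := integrable_F n hα _ habc
    calc F n α (a • β + b • γ)
        ≤ ∫ p, (a * max (α * p.1 ^ 2 - ∑ j, β j * (p.2 j) ^ 2) 0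
            + b * max (α * p.1 ^ 2 - ∑ j, γ j * (p.2 j) ^ 2) 0) ∂(M n) :=
          integral_mono hint0 ((hint1.const_mul a).add (hint2.const_mul b)) key
      _ = a • F n α β + b • F n α γ := by
          rw [integral_add (hint1.const_mul a) (hint2.const_mul b),
            integral_const_mul, integral_const_mul]
          simp [F, smul_eq_mul]

lemma F_comp_perm (n : ℕ) (α : ℝ) (β : Fin n → ℝ) (e : Equiv.Perm (Fin n)) :
    F n α (β ∘ e) = F n α β := by
  have h2 : MeasurePreserving (MeasurableEquiv.piCongrLeft (fun _ : Fin n => ℝ) e)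
      (Measure.pi fun _ : Fin n => gaussianReal 0 1)
      (Measure.pi fun _ : Fin n => gaussianReal 0 1) :=
    measurePreserving_piCongrLeft (fun _ => gaussianReal 0 1) e
  set T : (ℝ × (Fin n → ℝ)) ≃ᵐ (ℝ × (Fin n → ℝ)) :=
    (MeasurableEquiv.refl ℝ).prodCongr (MeasurableEquiv.piCongrLeft (fun _ : Fin n => ℝ) e)
    with hT
  have hpres : MeasurePreserving T (M n) (M n) :=
    (MeasurePreserving.id (gaussianReal 0 1)).prod h2
  have hint := hpres.integral_comp T.measurableEmbedding
    (fun p : ℝ × (Fin n → ℝ) => max (α * p.1 ^ 2 - ∑ j, β j * (p.2 j) ^ 2) 0)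
  rw [F, F, ← hint]
  refine integral_congr_ae (ae_of_all _ fun q => ?_)
  have hT2 : ∀ j, (T q).2 j = q.2 (e.symm j) := by
    intro j
    have h3 : (T q).2 = MeasurableEquiv.piCongrLeft (fun _ : Fin n => ℝ) e q.2 := rfl
    rw [h3]
    have := Equiv.piCongrLeft_apply_apply (fun _ : Fin n => ℝ) e q.2 (e.symm j)
    simp only [Equiv.apply_symm_apply] at this
    exact this
  have hT1 : (T q).1 = q.1 := rfl
  have hsum : ∑ j, β j * ((T q).2 j) ^ 2 = ∑ i, (β ∘ e) i * (q.2 i) ^ 2 := by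
    rw [← Equiv.sum_comp e (fun j => β j * ((T q).2 j) ^ 2)]
    refine Finset.sum_congr rfl fun i _ => ?_
    rw [hT2]
    simp
  dsimp only
  rw [hsum, hT1]

lemma F_const_le (n : ℕ) (hn : 0 < n) {α : ℝ} (hα : 0 ≤ α) (β : Fin n → ℝ) (hβ : ∀ j, 0 ≤ β j) :
    F n α (fun _ => (∑ j, β j) / n) ≤ F n α β := by
  haveI : NeZero n := ⟨hn.ne'⟩
  set w : Fin n → ℝ := fun _ => (n : ℝ)⁻¹ with hw
  set z : Fin n → (Fin n → ℝ) := fun k => β ∘ (Equiv.addRight k) with hz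
  have hn' : ((n : ℝ)) ≠ 0 := Nat.cast_ne_zero.mpr hn.ne'
  have h1 : ∑ k, w k • z k = fun _ => (∑ j, β j) / n := by
    funext j
    rw [Finset.sum_apply]
    have heach : ∀ k, (w k • z k) j = (n : ℝ)⁻¹ * β (j + k) := fun k => by
      simp only [hw, hz, Pi.smul_apply, smul_eq_mul, Function.comp_apply]
      rfl
    rw [Finset.sum_congr rfl fun k _ => heach k, ← Finset.mul_sum]
    rw [Fintype.sum_equiv (Equiv.addLeft j) (fun k => β (j + k)) β (fun k => by
      simp [Equiv.coe_addLeft])]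
    rw [inv_mul_eq_div]
  have hJ := (convexOn_F n hα).map_sum_le (t := Finset.univ) (w := w) (p := z)
    (fun k _ => by positivity)
    (by simp only [hw, Finset.sum_const, Finset.card_univ, Fintype.card_fin, nsmul_eq_mul]
        exact mul_inv_cancel₀ hn')
    (fun k _ => fun j => hβ _)
  rw [h1] at hJ
  refine hJ.trans (le_of_eq ?_)
  have h2 : ∀ k : Fin n, F n α (z k) = F n α β := fun k =>
    F_comp_perm n α β (Equiv.addRight k)
  rw [Finset.sum_congr rfl fun k _ => by rw [h2 k]]
  simp only [hw, smul_eq_mul, Finset.sum_const, Finset.card_univ, Fintype.card_fin,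
    nsmul_eq_mul]
  field_simp

lemma F_mono (n : ℕ) {α : ℝ} (hα : 0 ≤ α) {c d : ℝ} (hc : 0 ≤ c) (hcd : c ≤ d) :
    F n α (fun _ => d) ≤ F n α (fun _ => c) := by
  refine integral_mono (integrable_F n hα _ fun _ => hc.trans hcd)
    (integrable_F n hα _ fun _ => hc) fun p => ?_
  refine max_le_max (sub_le_sub_left ?_ _) le_rfl
  exact Finset.sum_le_sum fun j _ => mul_le_mul_of_nonneg_right hcd (sq_nonneg _)

end Stmt10Aux

open Stmt10Aux

theorem stmt_10 (r : ℕ) (hr : 2 ≤ r) (α ρ : ℝ) (hα : 0 < α) (hρ : 0 < ρ) :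
    IsLeast
      {v : ℝ | ∃ β : Fin (r - 1) → ℝ, (∀ j, 0 ≤ β j) ∧ (∑ j, β j) ≤ ρ ∧
        v = ∫ p, max (α * p.1 ^ 2 - ∑ j, β j * (p.2 j) ^ 2) 0
          ∂((gaussianReal 0 1).prod (Measure.pi fun _ : Fin (r - 1) => gaussianReal 0 1))}
      (∫ p, max (α * p.1 ^ 2 - ∑ j : Fin (r - 1), (ρ / ((r : ℝ) - 1)) * (p.2 j) ^ 2) 0
        ∂((gaussianReal 0 1).prod (Measure.pi fun _ : Fin (r - 1) => gaussianReal 0 1))) := by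
  set n := r - 1 with hn
  have hn0 : 0 < n := by omega
  have hcast : ((r : ℝ) - 1) = ((n : ℕ) : ℝ) := by
    rw [hn, Nat.cast_sub (by omega : 1 ≤ r)]
    norm_num
  have hrn : (0 : ℝ) < (n : ℝ) := by exact_mod_cast hn0
  constructor
  · refine ⟨fun _ => ρ / ((r : ℝ) - 1), fun j => ?_, ?_, rfl⟩
    · rw [hcast]; positivity
    · rw [Finset.sum_const, Finset.card_univ, Fintype.card_fin, nsmul_eq_mul, hcast]
      have hc : ((n : ℕ) : ℝ) * (ρ / ((n : ℕ) : ℝ)) = ρ := by field_simp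
      rw [hc]
  · rintro v ⟨β, hβ0, hβsum, rfl⟩
    have hs0 : 0 ≤ ∑ j, β j := Finset.sum_nonneg fun j _ => hβ0 j
    have step1 : F n α (fun _ => ρ / ((r : ℝ) - 1)) ≤ F n α (fun _ => (∑ j, β j) / n) := by
      refine F_mono n hα.le (c := (∑ j, β j) / n) (d := ρ / ((r : ℝ) - 1)) (by positivity) ?_
      rw [hcast]
      gcongr
    have step2 : F n α (fun _ => (∑ j, β j) / n) ≤ F n α β :=
      F_const_le n hn0 hα.le β hβ0
    exact (step1.trans step2)
end

section
/- Let X ⪰ 0 be an n×n symmetric positive semidefinite matrix with Tr(X) = 1, a ∈ ℝⁿ, and ρ > 0. Then the matrix B(X) = X^{1/2}(a aᵀ − ρ I) X^{1/2} has at most one positive eigenvalue, and Tr(B(X))₊ − Tr(B(X)) ≤ ρ, where Tr(M)₊ denotes the sum of positive eigenvalues of M. -/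
open Matrix Finset

section aux

variable {n : ℕ}

lemma dot_symm_mulVec {M : Matrix (Fin n) (Fin n) ℝ} (hM : M.IsHermitian)
    (x y : Fin n → ℝ) : x ⬝ᵥ (M *ᵥ y) = (M *ᵥ x) ⬝ᵥ y := by
  rw [dotProduct_mulVec, ← Matrix.mulVec_transpose]
  congr 1
  rw [← Matrix.conjTranspose_eq_transpose_of_trivial, hM.eq]

end aux

open scoped ComplexOrder in
/-- The positive semidefinite square root of a positive semidefinite matrix
(Mathlib's definition of December 2024, since removed). -/
noncomputable def Matrix.PosSemidef.sqrt {n : Type*} [Fintype n] {𝕜 : Type*} [RCLike 𝕜]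
    [DecidableEq n] {A : Matrix n n 𝕜} (hA : Matrix.PosSemidef A) : Matrix n n 𝕜 :=
  hA.1.eigenvectorUnitary.1 * Matrix.diagonal ((↑) ∘ (√·) ∘ hA.1.eigenvalues) *
  (star hA.1.eigenvectorUnitary : Matrix n n 𝕜)

lemma Matrix.PosSemidef.posSemidef_sqrt {m : Type*} [Fintype m] [DecidableEq m]
    {A : Matrix m m ℝ} (hA : A.PosSemidef) : hA.sqrt.PosSemidef := by
  unfold Matrix.PosSemidef.sqrt
  have hD : (Matrix.diagonal (RCLike.ofReal ∘ (√·) ∘ hA.1.eigenvalues : m → ℝ)).PosSemidef := by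
    rw [Matrix.posSemidef_diagonal_iff]
    intro i
    exact Real.sqrt_nonneg _
  have := hD.mul_mul_conjTranspose_same (hA.1.eigenvectorUnitary : Matrix m m ℝ)
  rw [Matrix.star_eq_conjTranspose]
  exact this

lemma Matrix.PosSemidef.sqrt_mul_self {m : Type*} [Fintype m] [DecidableEq m]
    {A : Matrix m m ℝ} (hA : A.PosSemidef) : hA.sqrt * hA.sqrt = A := by
  unfold Matrix.PosSemidef.sqrt
  have hU : (star (hA.1.eigenvectorUnitary : Matrix m m ℝ)) *
      (hA.1.eigenvectorUnitary : Matrix m m ℝ) = 1 :=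
    Unitary.coe_star_mul_self _
  have hD : Matrix.diagonal (RCLike.ofReal ∘ (√·) ∘ hA.1.eigenvalues : m → ℝ) *
      Matrix.diagonal (RCLike.ofReal ∘ (√·) ∘ hA.1.eigenvalues : m → ℝ) =
      Matrix.diagonal (RCLike.ofReal ∘ hA.1.eigenvalues) := by
    rw [Matrix.diagonal_mul_diagonal]
    congr 1
    funext i
    simp [Real.mul_self_sqrt (hA.eigenvalues_nonneg i)]
  conv_rhs => rw [hA.1.spectral_theorem, Unitary.conjStarAlgAut_apply]
  calc _ = (hA.1.eigenvectorUnitary : Matrix m m ℝ) *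
        (Matrix.diagonal (RCLike.ofReal ∘ (√·) ∘ hA.1.eigenvalues : m → ℝ) *
        ((star (hA.1.eigenvectorUnitary : Matrix m m ℝ)) *
        (hA.1.eigenvectorUnitary : Matrix m m ℝ)) *
        Matrix.diagonal (RCLike.ofReal ∘ (√·) ∘ hA.1.eigenvalues : m → ℝ)) *
        (star (hA.1.eigenvectorUnitary : Matrix m m ℝ)) := by
        simp only [Matrix.mul_assoc]
    _ = _ := by rw [hU, Matrix.mul_one, hD]

theorem stmt_11 (n : ℕ) (X : Matrix (Fin n) (Fin n) ℝ) (hX : X.PosSemidef)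
    (hTr : X.trace = 1) (a : Fin n → ℝ) (ρ : ℝ) (hρ : 0 < ρ)
    (hB : (hX.sqrt * (Matrix.vecMulVec a a - ρ • 1) * hX.sqrt).IsHermitian) :
    (Finset.univ.filter fun i => 0 < hB.eigenvalues i).card ≤ 1 ∧
      (∑ i, max (hB.eigenvalues i) 0) - (∑ i, hB.eigenvalues i) ≤ ρ := by
  set B := hX.sqrt * (Matrix.vecMulVec a a - ρ • 1) * hX.sqrt with hBdef
  set v : Fin n → ℝ := hX.sqrt *ᵥ a with hv
  have hsqrtH : hX.sqrt.IsHermitian := hX.posSemidef_sqrt.isHermitian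
  -- quadratic form identity
  have quad : ∀ z : Fin n → ℝ,
      z ⬝ᵥ (B *ᵥ z) = (v ⬝ᵥ z) ^ 2 - ρ * ((hX.sqrt *ᵥ z) ⬝ᵥ (hX.sqrt *ᵥ z)) := by
    intro z
    have h1 : B *ᵥ z = hX.sqrt *ᵥ ((Matrix.vecMulVec a a - ρ • 1) *ᵥ (hX.sqrt *ᵥ z)) := by
      simp [hBdef, Matrix.mulVec_mulVec, Matrix.mul_assoc]
    set y := hX.sqrt *ᵥ z with hy
    have h2 : (Matrix.vecMulVec a a) *ᵥ y = (a ⬝ᵥ y) • a := by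
      ext i
      simp only [Matrix.mulVec, Matrix.vecMulVec_apply, dotProduct, Pi.smul_apply,
        smul_eq_mul, Finset.sum_mul]
      exact Finset.sum_congr rfl fun x _ => by ring
    have h3 : z ⬝ᵥ (B *ᵥ z) = y ⬝ᵥ ((Matrix.vecMulVec a a - ρ • 1) *ᵥ y) := by
      rw [h1, dot_symm_mulVec hsqrtH]
    have h4 : v ⬝ᵥ z = a ⬝ᵥ y := by
      rw [hv, hy, dotProduct_comm, dot_symm_mulVec hsqrtH, dotProduct_comm]
    rw [h3, Matrix.sub_mulVec, dotProduct_sub, h2, h4]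
    simp only [dotProduct_smul, smul_eq_mul, Matrix.smul_mulVec, Matrix.one_mulVec]
    rw [dotProduct_comm y a]
    ring
  have hXz : ∀ z : Fin n → ℝ, 0 ≤ (hX.sqrt *ᵥ z) ⬝ᵥ (hX.sqrt *ᵥ z) := by
    intro z
    simpa [dotProduct] using Finset.sum_nonneg fun i _ => mul_self_nonneg _
  -- eigenvector facts
  set u : Fin n → Fin n → ℝ := fun i => ⇑(hB.eigenvectorBasis i) with hu
  have hmul : ∀ i, B *ᵥ u i = hB.eigenvalues i • u i := fun i => hB.mulVec_eigenvectorBasis i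
  have hortho : ∀ i j, u i ⬝ᵥ u j = if i = j then 1 else 0 := by
    intro i j
    have h := orthonormal_iff_ite.mp hB.eigenvectorBasis.orthonormal i j
    simpa [dotProduct, PiLp.inner_apply, RCLike.inner_apply, conj_trivial, mul_comm] using h
  have heig : ∀ i, u i ⬝ᵥ (B *ᵥ u i) = hB.eigenvalues i := by
    intro i
    rw [hmul i, dotProduct_smul, hortho i i]
    simp
  -- Part 1: at most one positive eigenvalue
  have part1 : (Finset.univ.filter fun i => 0 < hB.eigenvalues i).card ≤ 1 := by
    rw [Finset.card_le_one]
    intro i hi j hj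
    simp only [Finset.mem_filter] at hi hj
    by_contra hij
    -- both eigenvalues positive, i ≠ j
    set z : Fin n → ℝ := (v ⬝ᵥ u i) • u j - (v ⬝ᵥ u j) • u i with hz
    have hvz : v ⬝ᵥ z = 0 := by
      simp [hz, dotProduct_sub, dotProduct_smul]
      ring
    have hzBz1 : z ⬝ᵥ (B *ᵥ z) ≤ 0 := by
      rw [quad z, hvz]
      have := hXz z
      nlinarith
    have hBz : B *ᵥ z = (v ⬝ᵥ u i) • (hB.eigenvalues j • u j)
        - (v ⬝ᵥ u j) • (hB.eigenvalues i • u i) := by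
      rw [hz, Matrix.mulVec_sub, Matrix.mulVec_smul, Matrix.mulVec_smul, hmul, hmul]
    have hzBz2 : z ⬝ᵥ (B *ᵥ z) =
        (v ⬝ᵥ u i) ^ 2 * hB.eigenvalues j + (v ⬝ᵥ u j) ^ 2 * hB.eigenvalues i := by
      rw [hBz, hz]
      simp [sub_dotProduct, dotProduct_sub, smul_dotProduct,
        dotProduct_smul, hortho, hij, Ne.symm hij]
      ring
    -- so v ⬝ᵥ u i = 0 and v ⬝ᵥ u j = 0
    have hsq : (v ⬝ᵥ u i) ^ 2 = 0 := by
      nlinarith [hzBz1, hzBz2, hi.2, hj.2, sq_nonneg (v ⬝ᵥ u i), sq_nonneg (v ⬝ᵥ u j),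
        mul_nonneg (sq_nonneg (v ⬝ᵥ u i)) hj.2.le, mul_nonneg (sq_nonneg (v ⬝ᵥ u j)) hi.2.le]
    have hvi : v ⬝ᵥ u i = 0 := by
      have := sq_eq_zero_iff.mp hsq
      exact this
    have : hB.eigenvalues i ≤ 0 := by
      have := quad (u i)
      rw [heig i, hvi] at this
      have h0 := hXz (u i)
      nlinarith
    exact absurd hi.2 (by linarith)
  refine ⟨part1, ?_⟩
  -- trace of B
  have htrace : ∑ i, hB.eigenvalues i = B.trace := by
    have := hB.spectral_theorem
    calc ∑ i, hB.eigenvalues i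
        = (Matrix.diagonal (RCLike.ofReal ∘ hB.eigenvalues) : Matrix (Fin n) (Fin n) ℝ).trace := by
          simp [Matrix.trace_diagonal]
      _ = B.trace := by
          conv_rhs => rw [this, Unitary.conjStarAlgAut_apply]
          rw [Matrix.trace_mul_cycle]
          have hU : (star (hB.eigenvectorUnitary : Matrix (Fin n) (Fin n) ℝ)) *
              (hB.eigenvectorUnitary : Matrix (Fin n) (Fin n) ℝ) = 1 :=
            Unitary.coe_star_mul_self _
          rw [hU, Matrix.one_mul]
  have htraceB : B.trace = a ⬝ᵥ (X *ᵥ a) - ρ := by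
    have h1 : B.trace = (X * (Matrix.vecMulVec a a - ρ • 1)).trace := by
      rw [hBdef, Matrix.trace_mul_cycle, hX.sqrt_mul_self]
    rw [h1, Matrix.mul_sub, Matrix.trace_sub]
    have h2 : (X * Matrix.vecMulVec a a).trace = a ⬝ᵥ (X *ᵥ a) := by
      simp only [Matrix.trace, Matrix.diag_apply, Matrix.mul_apply, Matrix.vecMulVec_apply,
        dotProduct, Matrix.mulVec, Finset.mul_sum]
      exact Finset.sum_congr rfl fun i _ => Finset.sum_congr rfl fun j _ => by ring
    rw [h2]
    simp [hTr]
  -- v ⬝ᵥ v = a ⬝ᵥ X *ᵥ a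
  have hvv : v ⬝ᵥ v = a ⬝ᵥ (X *ᵥ a) := by
    rw [hv, dotProduct_comm, dot_symm_mulVec hsqrtH, Matrix.mulVec_mulVec,
      hX.sqrt_mul_self, dotProduct_comm]
  have hvv0 : 0 ≤ a ⬝ᵥ (X *ᵥ a) := by
    rw [← hvv]; simpa [dotProduct] using Finset.sum_nonneg fun i _ => mul_self_nonneg (v i)
  -- each eigenvalue ≤ a ⬝ᵥ X a
  have hlam : ∀ i, hB.eigenvalues i ≤ a ⬝ᵥ (X *ᵥ a) := by
    intro i
    have h1 := quad (u i)
    rw [heig i] at h1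
    have h2 : (v ⬝ᵥ u i) ^ 2 ≤ (v ⬝ᵥ v) * (u i ⬝ᵥ u i) := by
      have := Finset.sum_mul_sq_le_sq_mul_sq Finset.univ v (u i)
      simpa [dotProduct, sq] using this
    rw [hortho i i] at h2
    simp at h2
    have := hXz (u i)
    nlinarith [hvv]
  -- split on whether there is a positive eigenvalue
  have key : (∑ i, max (hB.eigenvalues i) 0) ≤ a ⬝ᵥ (X *ᵥ a) := by
    rcases Finset.eq_empty_or_nonempty (Finset.univ.filter fun i => 0 < hB.eigenvalues i)
      with hemp | ⟨i0, hi0⟩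
    · have : ∀ i, max (hB.eigenvalues i) 0 = 0 := by
        intro i
        have : ¬ 0 < hB.eigenvalues i := by
          intro h
          have : i ∈ Finset.univ.filter fun i => 0 < hB.eigenvalues i := by simp [h]
          simp [hemp] at this
        simp [max_eq_right (le_of_not_gt this)]
      simp [this, hvv0]
    · have hsum : ∑ i, max (hB.eigenvalues i) 0 = max (hB.eigenvalues i0) 0 := by
        rw [← Finset.sum_filter_add_sum_filter_not Finset.univ (fun i => 0 < hB.eigenvalues i)]
        have hone : (Finset.univ.filter fun i => 0 < hB.eigenvalues i) = {i0} := by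
          apply Finset.eq_singleton_iff_unique_mem.2
          exact ⟨hi0, fun j hj => Finset.card_le_one.1 part1 j hj i0 hi0⟩
        rw [hone, Finset.sum_singleton]
        have : ∑ i ∈ Finset.univ.filter (fun i => ¬ 0 < hB.eigenvalues i),
            max (hB.eigenvalues i) 0 = 0 := by
          apply Finset.sum_eq_zero
          intro j hj
          simp only [Finset.mem_filter] at hj
          simp [max_eq_right (le_of_not_gt hj.2)]
        rw [this, add_zero]
      rw [hsum]
      rcases le_or_gt (hB.eigenvalues i0) 0 with h | h
      · simp [max_eq_right h, hvv0]
      · rw [max_eq_left h.le]; exact hlam i0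
  refine le_trans ?_ (le_of_eq rfl)
  rw [htrace, htraceB]
  linarith [key]
end
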